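/- arXiv:1310.0947 — 2 statements merged into one kernel-verified Lean document; each statement's English description precedes it below -/
import Mathlib

section
/- Let f : [a,b] → ℝ be a mapping such that the (n−1)-th derivative f^(n−1) (n ≥ 1) is absolutely continuous on [a,b], let p > 1 and q satisfy 1/p + 1/q = 1, and suppose |f^(n)|^q is convex on [a,b]. Then for all x ∈ [a,b]: | ∫_a^b f(t) dt − Σ_{k=0}^{n−1} (1/(k+1)!) [ (x−a)^{k+1} f^(k)(a) + (−1)^k (b−x)^{k+1} f^(k)(b) ] | ≤ ((b−a)^{1/q} / n!) ( ((x−a)^{np+1} + (b−x)^{np+1}) / (np+1) )^{1/p} ( (|f^(n)(a)|^q + |f^(n)(b)|^q) / 2 )^{1/q}. -/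
/-!
Integrating by parts `n` times against the kernels `(x - t)^k / k!` turns the deviation of
`∫ f` from the boundary sum into the remainder `∫_a^b (x - t)^n / n! · f^(n)(t) dt`.
Hölder's inequality bounds it by `‖(x - ·)^n‖_p ‖f^(n)‖_q / n!`; the first norm is computed
explicitly, and the right half of the Hermite–Hadamard inequality for the convex function
`|f^(n)|^q` gives `∫_a^b |f^(n)|^q ≤ (b - a) (|f^(n)(a)|^q + |f^(n)(b)|^q) / 2`.
-/

open MeasureTheory Set Nat intervalIntegral

theorem integral_sub_pow_div_factorial_mul_eq {g g' : ℝ → ℝ} {a b : ℝ} (x : ℝ) (m : ℕ)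
    (hg : ∀ t ∈ uIcc a b, HasDerivAt g (g' t) t) (hg' : IntervalIntegrable g' volume a b) :
    ∫ t in a..b, (x - t) ^ m / (m ! : ℝ) * g t =
      1 / ((m + 1)! : ℝ) * ((x - a) ^ (m + 1) * g a + (-1) ^ m * (b - x) ^ (m + 1) * g b) +
        ∫ t in a..b, (x - t) ^ (m + 1) / ((m + 1)! : ℝ) * g' t := by
  have hkernel : ∀ t ∈ uIcc a b, HasDerivAt (fun t => -((x - t) ^ (m + 1) / ((m + 1)! : ℝ)))
      ((x - t) ^ m / (m ! : ℝ)) t := by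
    intro t _
    refine (((hasDerivAt_id' t).const_sub x).pow (m + 1) |>.div_const _ |>.neg).congr_deriv ?_
    rw [Nat.factorial_succ]
    push_cast
    field_simp
  have hibp := integral_mul_deriv_eq_deriv_mul hkernel hg
    ((continuous_const.sub continuous_id).pow m |>.div_const _ |>.intervalIntegrable a b) hg'
  simp only [neg_mul, intervalIntegral.integral_neg] at hibp
  have hxb : (x - b) ^ (m + 1) = (-1) ^ (m + 1) * (b - x) ^ (m + 1) := by
    rw [← neg_sub b x, neg_pow]
  rw [hxb] at hibp
  linear_combination hibp

theorem integral_eq_sum_add_integral_pow_mul_iteratedDeriv {f : ℝ → ℝ} {a b : ℝ}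
    (hab : a ≤ b) (x : ℝ) {n : ℕ}
    (hderiv : ∀ k < n, ∀ t ∈ Icc a b,
      HasDerivAt (iteratedDeriv k f) (iteratedDeriv (k + 1) f t) t)
    (hint : IntervalIntegrable (iteratedDeriv n f) volume a b) :
    ∫ t in a..b, f t =
      ∑ k ∈ Finset.range n, 1 / ((k + 1)! : ℝ) *
        ((x - a) ^ (k + 1) * iteratedDeriv k f a +
          (-1) ^ k * (b - x) ^ (k + 1) * iteratedDeriv k f b) +
      ∫ t in a..b, (x - t) ^ n / (n ! : ℝ) * iteratedDeriv n f t := by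
  induction n with
  | zero => simp
  | succ m ih =>
    have hderiv_m : ∀ t ∈ uIcc a b,
        HasDerivAt (iteratedDeriv m f) (iteratedDeriv (m + 1) f t) t := by
      rw [uIcc_of_le hab]
      exact hderiv m m.lt_succ_self
    have hint_m : IntervalIntegrable (iteratedDeriv m f) volume a b :=
      ContinuousOn.intervalIntegrable fun t ht => (hderiv_m t ht).continuousAt.continuousWithinAt
    rw [ih (fun k hk => hderiv k (hk.trans m.lt_succ_self)) hint_m,
      integral_sub_pow_div_factorial_mul_eq x m hderiv_m hint, Finset.sum_range_succ, add_assoc]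

theorem integral_abs_sub_rpow {a b x r : ℝ} (hx : x ∈ Icc a b) (hr : -1 < r) :
    ∫ t in a..b, |x - t| ^ r = ((x - a) ^ (r + 1) + (b - x) ^ (r + 1)) / (r + 1) := by
  have hr1 : r + 1 ≠ 0 := by linarith
  have hleft : EqOn (fun t => (x - t) ^ r) (fun t => |x - t| ^ r) (uIcc a x) := by
    intro t ht
    rw [uIcc_of_le hx.1] at ht
    simp only [abs_of_nonneg (sub_nonneg.2 ht.2)]
  have hright : EqOn (fun t => (t - x) ^ r) (fun t => |x - t| ^ r) (uIcc x b) := by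
    intro t ht
    rw [uIcc_of_le hx.2] at ht
    simp only [abs_sub_comm x, abs_of_nonneg (sub_nonneg.2 ht.1)]
  have hint_left : IntervalIntegrable (fun t => |x - t| ^ r) volume a x :=
    (by simpa using (intervalIntegrable_rpow' hr (a := x - a) (b := 0)).comp_sub_left x :
      IntervalIntegrable (fun t => (x - t) ^ r) volume a x).congr
      (hleft.mono uIoc_subset_uIcc)
  have hint_right : IntervalIntegrable (fun t => |x - t| ^ r) volume x b :=
    (by simpa using (intervalIntegrable_rpow' hr (a := 0) (b := b - x)).comp_sub_right x :
      IntervalIntegrable (fun t => (t - x) ^ r) volume x b).congr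
      (hright.mono uIoc_subset_uIcc)
  rw [← integral_add_adjacent_intervals hint_left hint_right, ← integral_congr hleft,
    ← integral_congr hright, integral_comp_sub_left (· ^ r), integral_comp_sub_right (· ^ r),
    integral_rpow (.inl hr), integral_rpow (.inl hr), sub_self, Real.zero_rpow hr1]
  ring

theorem intervalIntegral.integral_mul_le_Lp_mul_Lq_of_nonneg {p q : ℝ}
    (hpq : p.HolderConjugate q) {f g : ℝ → ℝ} {a b : ℝ} (hab : a ≤ b)
    (hf_nonneg : ∀ t, 0 ≤ f t) (hg_nonneg : ∀ t, 0 ≤ g t)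
    (hf_meas : AEStronglyMeasurable f (volume.restrict (Ioc a b)))
    (hg_meas : AEStronglyMeasurable g (volume.restrict (Ioc a b)))
    (hf : IntervalIntegrable (fun t => f t ^ p) volume a b)
    (hg : IntervalIntegrable (fun t => g t ^ q) volume a b) :
    ∫ t in a..b, f t * g t ≤
      (∫ t in a..b, f t ^ p) ^ (1 / p) * (∫ t in a..b, g t ^ q) ^ (1 / q) := by
  have hmemLp {h : ℝ → ℝ} {r : ℝ} (hr : 0 < r) (h_nonneg : ∀ t, 0 ≤ h t)
      (h_meas : AEStronglyMeasurable h (volume.restrict (Ioc a b)))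
      (h_int : IntervalIntegrable (fun t => h t ^ r) volume a b) :
      MemLp h (ENNReal.ofReal r) (volume.restrict (Ioc a b)) := by
    rw [← integrable_norm_rpow_iff h_meas (by simpa using hr) ENNReal.ofReal_ne_top,
      ENNReal.toReal_ofReal hr.le]
    simp only [Real.norm_of_nonneg (h_nonneg _)]
    exact h_int.1
  simp only [integral_of_le hab]
  exact MeasureTheory.integral_mul_le_Lp_mul_Lq_of_nonneg hpq
    (Filter.Eventually.of_forall hf_nonneg) (Filter.Eventually.of_forall hg_nonneg)
    (hmemLp hpq.pos hf_nonneg hf_meas hf) (hmemLp hpq.symm.pos hg_nonneg hg_meas hg)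

theorem ConvexOn.le_chord {g : ℝ → ℝ} {a b t : ℝ} (hg : ConvexOn ℝ (Icc a b) g) (hab : a < b)
    (ht : t ∈ Icc a b) : g t ≤ ((b - t) * g a + (t - a) * g b) / (b - a) := by
  have hba : 0 < b - a := sub_pos.2 hab
  have hconv := hg.2 (left_mem_Icc.2 hab.le) (right_mem_Icc.2 hab.le)
    (div_nonneg (sub_nonneg.2 ht.2) hba.le) (div_nonneg (sub_nonneg.2 ht.1) hba.le)
    (by field_simp; ring)
  have ht_eq : (b - t) / (b - a) * a + (t - a) / (b - a) * b = t := by field_simp; ring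
  simp only [smul_eq_mul, ht_eq] at hconv
  exact hconv.trans_eq (by ring)

theorem ConvexOn.intervalIntegral_le_mul_add_div_two {g : ℝ → ℝ} {a b : ℝ} (hab : a ≤ b)
    (hg : ConvexOn ℝ (Icc a b) g) (hint : IntervalIntegrable g volume a b) :
    ∫ t in a..b, g t ≤ (b - a) * ((g a + g b) / 2) := by
  rcases hab.eq_or_lt with rfl | hab
  · simp
  calc ∫ t in a..b, g t
      ≤ ∫ t in a..b, ((b - t) * g a + (t - a) * g b) / (b - a) :=
        integral_mono_on hab.le hint (Continuous.intervalIntegrable (by fun_prop) a b)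
          fun t ht => hg.le_chord hab ht
    _ = (b - a) * ((g a + g b) / 2) := by
        rw [intervalIntegral.integral_div,
          intervalIntegral.integral_add (Continuous.intervalIntegrable (by fun_prop) a b)
            (Continuous.intervalIntegrable (by fun_prop) a b),
          intervalIntegral.integral_mul_const,
          intervalIntegral.integral_mul_const,
          integral_comp_sub_left (fun s => s),
          integral_comp_sub_right (fun s => s), integral_id, integral_id]
        field_simp [(sub_pos.2 hab).ne']
        ring

theorem ConvexOn.intervalIntegrable_of_nonneg {g : ℝ → ℝ} {a b : ℝ} (hab : a ≤ b)
    (hg : ConvexOn ℝ (Icc a b) g) (hg_nonneg : ∀ t ∈ Icc a b, 0 ≤ g t)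
    (hg_meas : AEStronglyMeasurable g (volume.restrict (Ioc a b))) :
    IntervalIntegrable g volume a b := by
  rw [← uIoc_of_le hab] at hg_meas
  refine (intervalIntegrable_const (c := max (g a) (g b))).mono_fun' hg_meas ?_
  rw [uIoc_of_le hab]
  filter_upwards [ae_restrict_mem measurableSet_Ioc] with t ht
  have ht : t ∈ Icc a b := Ioc_subset_Icc_self ht
  rw [Real.norm_of_nonneg (hg_nonneg t ht)]
  exact hg.le_on_segment (left_mem_Icc.2 hab) (right_mem_Icc.2 hab) (by rwa [segment_eq_Icc hab])

theorem abs_integral_sub_pow_div_factorial_mul_le {p q : ℝ} (hpq : p.HolderConjugate q)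
    {h : ℝ → ℝ} {a b : ℝ} (hab : a ≤ b) (x : ℝ) (n : ℕ)
    (h_meas : AEStronglyMeasurable h (volume.restrict (Ioc a b)))
    (h_int : IntervalIntegrable (fun t => |h t| ^ q) volume a b) :
    |∫ t in a..b, (x - t) ^ n / (n ! : ℝ) * h t| ≤
      (n ! : ℝ)⁻¹ *
        ((∫ t in a..b, (|x - t| ^ n) ^ p) ^ (1 / p) * (∫ t in a..b, |h t| ^ q) ^ (1 / q)) := by
  have hp0 : 0 ≤ p := hpq.nonneg
  calc |∫ t in a..b, (x - t) ^ n / (n ! : ℝ) * h t|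
      ≤ ∫ t in a..b, (n ! : ℝ)⁻¹ * (|x - t| ^ n * |h t|) := by
        refine (abs_integral_le_integral_abs hab).trans_eq ?_
        simp only [div_eq_inv_mul, abs_mul, abs_inv, abs_pow, Nat.abs_cast, mul_assoc]
    _ ≤ _ := by
        rw [intervalIntegral.integral_const_mul]
        gcongr
        exact intervalIntegral.integral_mul_le_Lp_mul_Lq_of_nonneg hpq hab
          (f := fun t => |x - t| ^ n) (fun t => by positivity) (fun t => abs_nonneg _)
          (Continuous.aestronglyMeasurable (by fun_prop)) h_meas.norm
          (Continuous.intervalIntegrable (by fun_prop) a b) h_int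

theorem abs_integral_sub_sum_le_of_convexOn_rpow_abs_iteratedDeriv_general
    (f : ℝ → ℝ) (a b : ℝ) (hab : a < b) (n : ℕ)
    (p q : ℝ) (hp : 1 < p) (hpq : 1 / p + 1 / q = 1)
    (hderiv : ∀ k < n, ∀ t ∈ Icc a b,
      HasDerivAt (iteratedDeriv k f) (iteratedDeriv (k + 1) f t) t)
    (hint : IntervalIntegrable (iteratedDeriv n f) volume a b)
    (hconv : ConvexOn ℝ (Icc a b) (fun t => |iteratedDeriv n f t| ^ q))
    (x : ℝ) (hx : x ∈ Icc a b) :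
    |(∫ t in a..b, f t) -
      ∑ k ∈ Finset.range n, (1 / (Nat.factorial (k + 1) : ℝ)) *
        ((x - a) ^ (k + 1) * iteratedDeriv k f a +
          (-1 : ℝ) ^ k * (b - x) ^ (k + 1) * iteratedDeriv k f b)| ≤
      ((b - a) ^ (1 / q) / (Nat.factorial n : ℝ)) *
        (((x - a) ^ ((n : ℝ) * p + 1) + (b - x) ^ ((n : ℝ) * p + 1)) / ((n : ℝ) * p + 1))
          ^ (1 / p) *
        ((|iteratedDeriv n f a| ^ q + |iteratedDeriv n f b| ^ q) / 2) ^ (1 / q) := by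
  have hconj : p.HolderConjugate q :=
    Real.holderConjugate_iff.mpr ⟨hp, by simpa only [one_div] using hpq⟩
  have hp0 : 0 ≤ p := hconj.nonneg
  have hq0 : 0 ≤ q := hconj.symm.nonneg
  have hint_q : IntervalIntegrable (fun t => |iteratedDeriv n f t| ^ q) volume a b :=
    hconv.intervalIntegrable_of_nonneg hab.le (fun t _ => by positivity)
      (hint.1.1.aemeasurable.abs.pow_const q).aestronglyMeasurable
  have hkernel : ∫ t in a..b, (|x - t| ^ n) ^ p =
      ((x - a) ^ ((n : ℝ) * p + 1) + (b - x) ^ ((n : ℝ) * p + 1)) / ((n : ℝ) * p + 1) := by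
    simp_rw [← Real.rpow_natCast, ← Real.rpow_mul (abs_nonneg _)]
    exact integral_abs_sub_rpow hx (neg_one_lt_zero.trans_le (by positivity))
  have hkernel_nonneg : 0 ≤ ∫ t in a..b, (|x - t| ^ n) ^ p :=
    integral_nonneg hab.le fun t _ => by positivity
  have hint_q_nonneg : 0 ≤ ∫ t in a..b, |iteratedDeriv n f t| ^ q :=
    integral_nonneg hab.le fun t _ => by positivity
  rw [integral_eq_sum_add_integral_pow_mul_iteratedDeriv hab.le x hderiv hint, add_sub_cancel_left]
  calc _ ≤ (n ! : ℝ)⁻¹ * ((∫ t in a..b, (|x - t| ^ n) ^ p) ^ (1 / p) *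
          (∫ t in a..b, |iteratedDeriv n f t| ^ q) ^ (1 / q)) :=
        abs_integral_sub_pow_div_factorial_mul_le hconj hab.le x n
          hint.1.aestronglyMeasurable hint_q
    _ ≤ (n ! : ℝ)⁻¹ * ((∫ t in a..b, (|x - t| ^ n) ^ p) ^ (1 / p) *
          ((b - a) * ((|iteratedDeriv n f a| ^ q + |iteratedDeriv n f b| ^ q) / 2)) ^ (1 / q)) := by
        gcongr
        exact hconv.intervalIntegral_le_mul_add_div_two hab.le hint_q
    _ = _ := by
        rw [hkernel, Real.mul_rpow (by linarith) (by positivity)]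
        ring

/-- **Theorem (Hölder-type estimate).** If `f^(n-1)` (`n ≥ 1`) is absolutely continuous on
`[a, b]`, `p > 1`, `1/p + 1/q = 1`, and `|f^(n)|^q` is convex on `[a, b]`, then for all
`x ∈ [a, b]`,
`|∫_a^b f - ∑_{k=0}^{n-1} (1/(k+1)!) [(x-a)^{k+1} f^(k)(a) + (-1)^k (b-x)^{k+1} f^(k)(b)]|
  ≤ ((b-a)^{1/q}/n!) (((x-a)^{np+1} + (b-x)^{np+1})/(np+1))^{1/p}
      ((|f^(n)(a)|^q + |f^(n)(b)|^q)/2)^{1/q}`. -/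
theorem abs_integral_sub_sum_le_of_convexOn_rpow_abs_iteratedDeriv
    (f : ℝ → ℝ) (a b : ℝ) (hab : a < b) (n : ℕ) (hn : 1 ≤ n)
    (p q : ℝ) (hp : 1 < p) (hpq : 1 / p + 1 / q = 1)
    (hderiv : ∀ k < n, ∀ t ∈ Icc a b,
      HasDerivAt (iteratedDeriv k f) (iteratedDeriv (k + 1) f t) t)
    (hint : IntervalIntegrable (iteratedDeriv n f) volume a b)
    (hconv : ConvexOn ℝ (Icc a b) (fun t => |iteratedDeriv n f t| ^ q))
    (x : ℝ) (hx : x ∈ Icc a b) :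
    |(∫ t in a..b, f t) -
      ∑ k ∈ Finset.range n, (1 / (Nat.factorial (k + 1) : ℝ)) *
        ((x - a) ^ (k + 1) * iteratedDeriv k f a +
          (-1 : ℝ) ^ k * (b - x) ^ (k + 1) * iteratedDeriv k f b)| ≤
      ((b - a) ^ (1 / q) / (Nat.factorial n : ℝ)) *
        (((x - a) ^ ((n : ℝ) * p + 1) + (b - x) ^ ((n : ℝ) * p + 1)) / ((n : ℝ) * p + 1))
          ^ (1 / p) *
        ((|iteratedDeriv n f a| ^ q + |iteratedDeriv n f b| ^ q) / 2) ^ (1 / q) :=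
  abs_integral_sub_sum_le_of_convexOn_rpow_abs_iteratedDeriv_general f a b hab n p q hp hpq hderiv
    hint hconv x hx
end

section
/- Let f : I° ⊂ ℝ → ℝ be a differentiable mapping on the interior I° of an interval I, let a, b ∈ I° with a < b, and let p > 1. If |f′|^{p/(p−1)} is convex on [a,b], then: | (f(a)+f(b))/2 − (1/(b−a)) ∫_a^b f(x) dx | ≤ ((b−a) / (2(p+1)^{1/p})) · ( ( |f′(a)|^{p/(p−1)} + |f′(b)|^{p/(p−1)} ) / 2 )^{(p−1)/p}. -/
open MeasureTheory Set intervalIntegral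

/-! Integration by parts against the kernel `x - (a + b) / 2` writes the trapezoid error as
`(1 / (b - a)) ∫ (x - (a + b) / 2) f'(x) dx`. Hölder's inequality with `q = p / (p - 1)` splits
this into the explicit `L^p` norm of the kernel and `(∫ |f'|^q)^(1/q)`, and the latter integral
is at most `(b - a) (|f'(a)|^q + |f'(b)|^q) / 2` because a convex function lies below its chord
(the right half of the Hermite–Hadamard inequality). The same chord bound makes `f'` bounded,
hence integrable, on `[a, b]`. -/

theorem integral_sub_midpoint_mul_deriv {f f' : ℝ → ℝ} {a b : ℝ}
    (hf : ∀ x ∈ uIcc a b, HasDerivAt f (f' x) x) (hf' : IntervalIntegrable f' volume a b) :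
    ∫ x in a..b, (x - (a + b) / 2) * f' x = (b - a) * ((f a + f b) / 2) - ∫ x in a..b, f x := by
  have h := integral_mul_deriv_eq_deriv_mul (fun x _ => (hasDerivAt_id x).sub_const ((a + b) / 2))
    hf intervalIntegrable_const hf'
  simp only [one_mul, id] at h
  rw [h]
  ring

theorem integral_abs_rpow_neg_self {h p : ℝ} (hh : 0 ≤ h) (hp : 0 ≤ p) :
    ∫ x in -h..h, |x| ^ p = 2 * (h ^ (p + 1) / (p + 1)) := by
  have hcont : Continuous fun x : ℝ => |x| ^ p :=
    continuous_abs.rpow_const fun _ => Or.inr hp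
  have hpos : ∫ x in (0)..h, |x| ^ p = h ^ (p + 1) / (p + 1) := by
    rw [integral_congr (g := fun x => x ^ p) fun x hx => by
        rw [uIcc_of_le hh] at hx; simp only [abs_of_nonneg hx.1],
      integral_rpow (Or.inl (by linarith)), Real.zero_rpow (by positivity), sub_zero]
  have hneg : ∫ x in -h..0, |x| ^ p = ∫ x in (0)..h, |x| ^ p := by
    simpa using (integral_comp_neg (a := 0) (b := h) fun x => |x| ^ p).symm
  rw [← integral_add_adjacent_intervals (b := 0) (hcont.intervalIntegrable _ _)
    (hcont.intervalIntegrable _ _), hneg, hpos]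
  ring

theorem integral_abs_sub_midpoint_rpow {a b p : ℝ} (hab : a ≤ b) (hp : 0 ≤ p) :
    ∫ x in a..b, |x - (a + b) / 2| ^ p = (b - a) ^ (p + 1) / (2 ^ p * (p + 1)) := by
  rw [integral_comp_sub_right (fun x => |x| ^ p), show a - (a + b) / 2 = -((b - a) / 2) by ring,
    show b - (a + b) / 2 = (b - a) / 2 by ring, integral_abs_rpow_neg_self (by linarith) hp,
    Real.div_rpow (by linarith) zero_le_two, Real.rpow_add_one two_ne_zero]
  field_simp

theorem ConvexOn.le_add_mul_slope {g : ℝ → ℝ} {a b x : ℝ} (hg : ConvexOn ℝ (Icc a b) g)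
    (hab : a < b) (hx : x ∈ Icc a b) :
    g x ≤ g a + (x - a) * slope g a b := by
  have hba : 0 < b - a := sub_pos.2 hab
  have h := hg.2 (left_mem_Icc.2 hab.le) (right_mem_Icc.2 hab.le)
    (div_nonneg (sub_nonneg.2 hx.2) hba.le) (div_nonneg (sub_nonneg.2 hx.1) hba.le)
    (by field_simp; ring)
  have hcomb : (b - x) / (b - a) * a + (x - a) / (b - a) * b = x := by field_simp; ring
  simp only [smul_eq_mul, hcomb] at h
  calc g x ≤ _ := h
    _ = _ := by rw [slope_def_field]; field_simp; ring

theorem ConvexOn.integral_le_mul_average_endpoints {g : ℝ → ℝ} {a b : ℝ}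
    (hg : ConvexOn ℝ (Icc a b) g) (hab : a ≤ b) (hgi : IntervalIntegrable g volume a b) :
    ∫ x in a..b, g x ≤ (b - a) * ((g a + g b) / 2) := by
  rcases hab.eq_or_lt with rfl | hab
  · simp
  have hba : b - a ≠ 0 := (sub_pos.2 hab).ne'
  calc ∫ x in a..b, g x ≤ ∫ x in a..b, (g a + (x - a) * slope g a b) :=
        integral_mono_on hab.le hgi (Continuous.intervalIntegrable (by fun_prop) _ _)
          fun x hx => hg.le_add_mul_slope hab hx
    _ = (b - a) * ((g a + g b) / 2) := by
        rw [integral_add intervalIntegrable_const (Continuous.intervalIntegrable (by fun_prop) _ _),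
          intervalIntegral.integral_const, intervalIntegral.integral_mul_const,
          integral_comp_sub_right fun x => x, integral_id, slope_def_field]
        field_simp
        ring

theorem intervalIntegral.integral_abs_mul_le_Lp_mul_Lq {u v : ℝ → ℝ} {a b p q : ℝ}
    (hab : a ≤ b) (hpq : p.HolderConjugate q)
    (hu : MemLp u (ENNReal.ofReal p) (volume.restrict (Ioc a b)))
    (hv : MemLp v (ENNReal.ofReal q) (volume.restrict (Ioc a b))) :
    ∫ x in a..b, |u x| * |v x| ≤
      (∫ x in a..b, |u x| ^ p) ^ (1 / p) * (∫ x in a..b, |v x| ^ q) ^ (1 / q) := by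
  simpa only [integral_of_le hab, Real.norm_eq_abs] using integral_mul_norm_le_Lp_mul_Lq hpq hu hv

theorem memLp_restrict_Ioc_of_abs_le {u : ℝ → ℝ} {a b M : ℝ}
    (hu : AEStronglyMeasurable u (volume.restrict (Ioc a b))) (hM : ∀ x ∈ Ioc a b, |u x| ≤ M)
    (r : ENNReal) : MemLp u r (volume.restrict (Ioc a b)) :=
  MemLp.of_bound hu M ((ae_restrict_iff' measurableSet_Ioc).2 (ae_of_all _ hM))

theorem intervalIntegrable_of_abs_le {u : ℝ → ℝ} {a b M : ℝ} (hab : a ≤ b)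
    (hu : AEStronglyMeasurable u (volume.restrict (Ioc a b)))
    (hM : ∀ x ∈ Ioc a b, |u x| ≤ M) : IntervalIntegrable u volume a b :=
  (intervalIntegrable_iff_integrableOn_Ioc_of_le hab).2
    ((memLp_restrict_Ioc_of_abs_le hu hM 1).integrable le_rfl)

theorem abs_integral_sub_midpoint_mul_le {v : ℝ → ℝ} {a b p q : ℝ} (hab : a ≤ b)
    (hpq : p.HolderConjugate q) (hv : MemLp v (ENNReal.ofReal q) (volume.restrict (Ioc a b))) :
    |∫ x in a..b, (x - (a + b) / 2) * v x| ≤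
      ((b - a) ^ (p + 1) / (2 ^ p * (p + 1))) ^ (1 / p) * (∫ x in a..b, |v x| ^ q) ^ (1 / q) := by
  have hu : MemLp (fun x => x - (a + b) / 2) (ENNReal.ofReal p) (volume.restrict (Ioc a b)) :=
    memLp_restrict_Ioc_of_abs_le (M := b - a) (by fun_prop)
      (fun x hx => abs_le.2 ⟨by linarith [hx.1, hx.2], by linarith [hx.1, hx.2]⟩) _
  calc |∫ x in a..b, (x - (a + b) / 2) * v x|
      ≤ ∫ x in a..b, |x - (a + b) / 2| * |v x| := by
        simpa only [abs_mul] using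
          abs_integral_le_integral_abs (f := fun x => (x - (a + b) / 2) * v x) hab
    _ ≤ (∫ x in a..b, |x - (a + b) / 2| ^ p) ^ (1 / p) * (∫ x in a..b, |v x| ^ q) ^ (1 / q) :=
        integral_abs_mul_le_Lp_mul_Lq hab hpq hu hv
    _ = _ := by rw [integral_abs_sub_midpoint_rpow hab hpq.nonneg]

theorem inv_mul_rpow_mul_rpow_eq_of_holderConjugate {L S p q : ℝ} (hL : 0 < L) (hS : 0 ≤ S)
    (hpq : p.HolderConjugate q) :
    1 / L * ((L ^ (p + 1) / (2 ^ p * (p + 1))) ^ (1 / p) * (L * S) ^ (1 / q)) =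
      L / (2 * (p + 1) ^ (1 / p)) * S ^ (1 / q) := by
  have hp := hpq.pos
  have hexp : (p + 1) * (1 / p) + 1 / q = 2 := by
    have := hpq.inv_add_inv_eq_one
    field_simp at this ⊢
    linarith
  have hL2 : L ^ ((p + 1) * (1 / p)) * L ^ (1 / q) = L * L := by
    rw [← Real.rpow_add hL, hexp, Real.rpow_two, sq]
  rw [Real.div_rpow (by positivity) (by positivity), Real.mul_rpow (by positivity) (by positivity),
    ← Real.rpow_mul zero_le_two, mul_one_div_cancel hp.ne', Real.rpow_one,
    ← Real.rpow_mul hL.le, Real.mul_rpow hL.le hS]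
  calc 1 / L * (L ^ ((p + 1) * (1 / p)) / (2 * (p + 1) ^ (1 / p)) * (L ^ (1 / q) * S ^ (1 / q)))
      = 1 / L * (L ^ ((p + 1) * (1 / p)) * L ^ (1 / q)) / (2 * (p + 1) ^ (1 / p)) *
          S ^ (1 / q) := by ring
    _ = _ := by rw [hL2]; field_simp

theorem abs_trapezoid_sub_integral_le_of_convexOn_rpow_abs_deriv_of_holderConjugate
    {f : ℝ → ℝ} {a b p q : ℝ} (hab : a < b) (hpq : p.HolderConjugate q)
    (hf : ∀ x ∈ Icc a b, DifferentiableAt ℝ f x)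
    (hconv : ConvexOn ℝ (Icc a b) fun t => |deriv f t| ^ q) :
    |(f a + f b) / 2 - (1 / (b - a)) * ∫ t in a..b, f t| ≤
      ((b - a) / (2 * (p + 1) ^ (1 / p))) *
        ((|deriv f a| ^ q + |deriv f b| ^ q) / 2) ^ (1 / q) := by
  have hL : 0 < b - a := sub_pos.2 hab
  have hp := hpq.pos
  have hq := hpq.symm.pos
  set C := max (|deriv f a| ^ q) (|deriv f b| ^ q)
  have hgC : ∀ x ∈ Icc a b, |deriv f x| ^ q ≤ C := fun x hx =>
    hconv.le_on_segment (left_mem_Icc.2 hab.le) (right_mem_Icc.2 hab.le)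
      (by rwa [segment_eq_Icc hab.le])
  have hf'C : ∀ x ∈ Icc a b, |deriv f x| ≤ C ^ (1 / q) := fun x hx => by
    simpa only [one_div, Real.rpow_rpow_inv (abs_nonneg _) hq.ne'] using
      Real.rpow_le_rpow (by positivity) (hgC x hx) (by positivity : 0 ≤ 1 / q)
  have hmeas : Measurable (deriv f) := measurable_deriv f
  have hf'i : IntervalIntegrable (deriv f) volume a b :=
    intervalIntegrable_of_abs_le hab.le hmeas.aestronglyMeasurable
      fun x hx => hf'C x (Ioc_subset_Icc_self hx)
  have hgi : IntervalIntegrable (fun x => |deriv f x| ^ q) volume a b :=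
    intervalIntegrable_of_abs_le hab.le (hmeas.abs.pow_const q).aestronglyMeasurable
      fun x hx => (abs_of_nonneg (by positivity)).trans_le (hgC x (Ioc_subset_Icc_self hx))
  have hid : (f a + f b) / 2 - (1 / (b - a)) * ∫ t in a..b, f t =
      (1 / (b - a)) * ∫ x in a..b, (x - (a + b) / 2) * deriv f x := by
    rw [integral_sub_midpoint_mul_deriv
      (fun x hx => (hf x (by rwa [uIcc_of_le hab.le] at hx)).hasDerivAt) hf'i]
    field_simp
  rw [hid, abs_mul, abs_of_pos (one_div_pos.2 hL)]
  calc 1 / (b - a) * |∫ x in a..b, (x - (a + b) / 2) * deriv f x|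
      ≤ 1 / (b - a) * (((b - a) ^ (p + 1) / (2 ^ p * (p + 1))) ^ (1 / p) *
          (∫ x in a..b, |deriv f x| ^ q) ^ (1 / q)) := by
        gcongr
        exact abs_integral_sub_midpoint_mul_le hab.le hpq (memLp_restrict_Ioc_of_abs_le
          hmeas.aestronglyMeasurable (fun x hx => hf'C x (Ioc_subset_Icc_self hx)) _)
    _ ≤ 1 / (b - a) * (((b - a) ^ (p + 1) / (2 ^ p * (p + 1))) ^ (1 / p) *
          ((b - a) * ((|deriv f a| ^ q + |deriv f b| ^ q) / 2)) ^ (1 / q)) := by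
        gcongr
        · exact intervalIntegral.integral_nonneg hab.le fun x _ => by positivity
        · exact hconv.integral_le_mul_average_endpoints hab.le hgi
    _ = _ := inv_mul_rpow_mul_rpow_eq_of_holderConjugate hL (by positivity) hpq

/-- **Theorem (Dragomir–Agarwal, Hölder version).** Let `f` be differentiable on the interior
of an interval `I ⊆ ℝ`, let `a, b ∈ I°` with `a < b`, and let `p > 1`. If `|f'|^{p/(p-1)}` is
convex on `[a, b]`, then
`|(f(a)+f(b))/2 - (1/(b-a)) ∫_a^b f|
  ≤ ((b-a)/(2(p+1)^{1/p})) ((|f'(a)|^{p/(p-1)} + |f'(b)|^{p/(p-1)})/2)^{(p-1)/p}`. -/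
theorem abs_trapezoid_sub_integral_le_of_convexOn_rpow_abs_deriv'
    (I : Set ℝ) (hI : Convex ℝ I) (f : ℝ → ℝ)
    (hf : ∀ t ∈ interior I, DifferentiableAt ℝ f t)
    (a b : ℝ) (ha : a ∈ interior I) (hb : b ∈ interior I) (hab : a < b)
    (p : ℝ) (hp : 1 < p)
    (hconv : ConvexOn ℝ (Icc a b) (fun t => |deriv f t| ^ (p / (p - 1)))) :
    |(f a + f b) / 2 - (1 / (b - a)) * ∫ t in a..b, f t| ≤
      ((b - a) / (2 * (p + 1) ^ (1 / p))) *
        ((|deriv f a| ^ (p / (p - 1)) + |deriv f b| ^ (p / (p - 1))) / 2) ^ ((p - 1) / p) := by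
  have hsub : Icc a b ⊆ interior I := hI.interior.ordConnected.out ha hb
  have h := abs_trapezoid_sub_integral_le_of_convexOn_rpow_abs_deriv_of_holderConjugate hab
    (Real.HolderConjugate.conjExponent hp) (fun x hx => hf x (hsub hx)) hconv
  rwa [Real.conjExponent, one_div_div] at h
end
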